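/- arXiv:1704.06730 — 2 statements merged into one kernel-verified Lean document; each statement's English description precedes it below -/
import Mathlib

section
/- Let Δ ≥ 4, or Δ = 3 and k ≥ 4. Let X be the k×k symmetric tridiagonal matrix with diagonal entries (0, 0, ..., 0, 2), off-diagonal entries X_{i,i+1} = √(Δ−1) for 1 ≤ i ≤ k−2, and X_{k−1,k} = √(Δ−2). Then ρ(X) < 2√(Δ−1)·cos(π/(2k+1)). -/
/-!
Collatz–Wielandt: if a nonnegative matrix `A` has an entrywise positive vector `v` with
`A v ≤ ρ v`, every eigenvalue of `A` has modulus at most `ρ`.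

With `b = √(Δ-1)` and `θ = π/(2k+1)`, the Perron vector of the comparison matrix `Y` is
`(sin ((i+1) θ))ᵢ`. Rescaling its last coordinate by `b / √(Δ-2)` makes every row of `X` except
the last an exact eigen-equation for `2 b cos θ`, and the last row holds strictly precisely when
`2 (1 - cos θ) < (b - 1)²`; this is where the hypotheses on `Δ` and `k` enter, through
`1 - cos θ ≤ θ² / 2`. By continuity the last row still holds at some `φ` slightly larger than
`θ`, and then `ρ(X) ≤ 2 b cos φ < 2 b cos θ`.
-/

open Matrix Real

/-- The spectral radius of a real matrix: the maximum of the absolute values of its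
complex eigenvalues (roots of its characteristic polynomial over ℂ). -/
noncomputable def specRad {m : Type*} [Fintype m] [DecidableEq m]
    (A : Matrix m m ℝ) : ℝ :=
  ((A.charpoly.aroots ℂ).map (fun z => ‖z‖)).foldr max 0

open Polynomial

variable {m : Type*} [Fintype m]

theorem Matrix.exists_mulVec_eq_smul_of_isRoot_charpoly [DecidableEq m] {K : Type*} [Field K]
    {A : Matrix m m K} {z : K} (hz : A.charpoly.IsRoot z) : ∃ u ≠ 0, A *ᵥ u = z • u := by
  rw [IsRoot, eval_charpoly] at hz
  obtain ⟨u, hu, hAu⟩ := exists_mulVec_eq_zero_iff.2 hz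
  rw [sub_mulVec, sub_eq_zero] at hAu
  refine ⟨u, hu, hAu ▸ ?_⟩
  ext i
  simp [mulVec_diagonal]

theorem specRad_le [DecidableEq m] {A : Matrix m m ℝ} {ρ : ℝ} (hρ : 0 ≤ ρ)
    (h : ∀ z ∈ A.charpoly.aroots ℂ, ‖z‖ ≤ ρ) : specRad A ≤ ρ := by
  suffices ∀ s : Multiset ℂ, (∀ z ∈ s, ‖z‖ ≤ ρ) → (s.map (‖·‖)).foldr max 0 ≤ ρ from
    this _ h
  intro s h
  induction s using Multiset.induction with
  | empty => simpa using hρ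
  | cons a t ih =>
    rw [Multiset.map_cons, Multiset.foldr_cons]
    exact max_le (h a (Multiset.mem_cons_self a t))
      (ih fun z hz => h z (Multiset.mem_cons_of_mem hz))

theorem norm_le_of_mulVec_le {A : Matrix m m ℝ} (hA : ∀ i j, 0 ≤ A i j) {v : m → ℝ}
    (hv : ∀ i, 0 < v i) {ρ : ℝ} (hAv : ∀ i, (A *ᵥ v) i ≤ ρ * v i) {z : ℂ} {u : m → ℂ}
    (hu : u ≠ 0) (hz : A.map (algebraMap ℝ ℂ) *ᵥ u = z • u) : ‖z‖ ≤ ρ := by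
  obtain ⟨j₀, hj₀⟩ := Function.ne_iff.1 hu
  obtain ⟨i, -, hi⟩ := Finset.exists_max_image Finset.univ (fun i => ‖u i‖ / v i)
    ⟨j₀, Finset.mem_univ _⟩
  set r := ‖u i‖ / v i
  have hur : ∀ j, ‖u j‖ ≤ r * v j := fun j =>
    (div_le_iff₀ (hv j)).1 (hi j (Finset.mem_univ j))
  have hr : 0 < r := (div_pos (norm_pos_iff.2 hj₀) (hv j₀)).trans_le (hi j₀ (Finset.mem_univ _))
  have hui : ‖u i‖ = r * v i := (div_mul_cancel₀ _ (hv i).ne').symm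
  have key : ‖z‖ * (r * v i) ≤ ρ * (r * v i) := calc
    ‖z‖ * (r * v i) = ‖∑ j, (A i j : ℂ) * u j‖ := by
      rw [← hui, ← norm_mul, ← smul_eq_mul, ← Pi.smul_apply, ← hz]; rfl
    _ ≤ ∑ j, A i j * ‖u j‖ := by
      refine (norm_sum_le _ _).trans_eq (Finset.sum_congr rfl fun j _ => ?_)
      rw [norm_mul, Complex.norm_real, Real.norm_of_nonneg (hA i j)]
    _ ≤ ∑ j, A i j * (r * v j) :=
      Finset.sum_le_sum fun j _ => mul_le_mul_of_nonneg_left (hur j) (hA i j)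
    _ = r * (A *ᵥ v) i := by
      simp only [mulVec, dotProduct, Finset.mul_sum]
      exact Finset.sum_congr rfl fun j _ => by ring
    _ ≤ ρ * (r * v i) := by
      rw [mul_left_comm]
      exact mul_le_mul_of_nonneg_left (hAv i) hr.le
  exact le_of_mul_le_mul_right key (mul_pos hr (hv i))

theorem specRad_le_of_mulVec_le [DecidableEq m] {A : Matrix m m ℝ} {v : m → ℝ} {ρ : ℝ}
    (hρ : 0 ≤ ρ) (hA : ∀ i j, 0 ≤ A i j) (hv : ∀ i, 0 < v i) (hAv : ∀ i, (A *ᵥ v) i ≤ ρ * v i) :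
    specRad A ≤ ρ := by
  refine specRad_le hρ fun z hz => ?_
  rw [mem_aroots, ← Polynomial.eval_map_algebraMap, ← charpoly_map] at hz
  obtain ⟨u, hu, hAu⟩ := exists_mulVec_eq_smul_of_isRoot_charpoly hz.2
  exact norm_le_of_mulVec_le hA hv hAv hu hAu

open Finset

theorem sum_fin_eq_of_band {k i : ℕ} (hi : i < k) (F : ℕ → ℝ)
    (hF : ∀ j, j + 1 < i ∨ i + 1 < j → F j = 0) :
    ∑ j : Fin k, F j = (if i = 0 then 0 else F (i - 1)) + F i +
      (if i + 1 = k then 0 else F (i + 1)) := by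
  obtain ⟨r, rfl⟩ : ∃ r, k = i + 1 + r := ⟨k - (i + 1), by omega⟩
  rw [Fin.sum_univ_eq_sum_range F, sum_range_add, sum_range_succ]
  have below : (∑ j ∈ range i, F j) = if i = 0 then 0 else F (i - 1) := by
    rcases i with _ | i
    · simp
    · rw [sum_range_succ, sum_eq_zero fun j hj => hF j (.inl (by simp at hj; omega))]
      simp
  have above : (∑ j ∈ range r, F (i + 1 + j)) = if i + 1 = i + 1 + r then 0 else F (i + 1) := by
    rcases r with _ | r
    · simp
    · rw [sum_range_succ', sum_eq_zero fun j _ => hF _ (.inr (by omega))]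
      simp
  rw [below, above]

def pathWithLoopEntry (k : ℕ) (a b d : ℝ) (i j : ℕ) : ℝ :=
  if i = j then (if i = k - 1 then d else 0)
  else if i + 1 = j ∨ j + 1 = i then (if i = k - 1 ∨ j = k - 1 then a else b) else 0

theorem mul_sin_add_mul_sin_eq_mul_cos_mul_sin (b x φ : ℝ) :
    b * sin (x * φ) + b * sin ((x + 1 + 1) * φ) = 2 * b * cos φ * sin ((x + 1) * φ) := by
  rw [show x * φ = (x + 1) * φ - φ by ring, show (x + 1 + 1) * φ = (x + 1) * φ + φ by ring,
    sin_sub, sin_add]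
  ring

noncomputable def sineVector (k : ℕ) (c φ : ℝ) (j : ℕ) : ℝ :=
  (if j = k - 1 then c else 1) * sin ((j + 1 : ℕ) * φ)

theorem pathWithLoop_row_le {k : ℕ} {a b d φ : ℝ} (ha : 0 < a)
    (hlast : a ^ 2 * sin ((k - 1 : ℕ) * φ) + d * b * sin (k * φ) ≤
      2 * b ^ 2 * cos φ * sin (k * φ)) {i : ℕ} (hi : i < k) :
    ∑ j : Fin k, pathWithLoopEntry k a b d i j * sineVector k (b / a) φ j ≤
      2 * b * cos φ * sineVector k (b / a) φ i := by
  refine (sum_fin_eq_of_band hi (fun j => pathWithLoopEntry k a b d i j * sineVector k (b / a) φ j)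
    fun j hj => ?_).trans_le ?_
  · rw [pathWithLoopEntry, if_neg (by omega), if_neg (by omega), zero_mul]
  have hb : a * (b / a) = b := mul_div_cancel₀ b ha.ne'
  have left : (if i = 0 then 0 else
      pathWithLoopEntry k a b d i (i - 1) * sineVector k (b / a) φ (i - 1)) =
      (if i = k - 1 then a else b) * sin (i * φ) := by
    rcases i with _ | i
    · simp
    · simp [pathWithLoopEntry, sineVector, show i ≠ k - 1 by omega]
  simp only [left]
  rcases Nat.lt_or_ge (i + 2) k with hinner | hnotinner
  · simp [pathWithLoopEntry, sineVector, show i ≠ k - 1 by omega, show i + 1 ≠ k - 1 by omega,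
      show i + 1 ≠ k by omega]
    exact (mul_sin_add_mul_sin_eq_mul_cos_mul_sin _ _ _).le
  rcases Nat.lt_or_ge (i + 1) k with hpenult | hfinal
  · obtain rfl : k = i + 2 := by omega
    simp [pathWithLoopEntry, sineVector, ← mul_assoc, hb]
    exact (mul_sin_add_mul_sin_eq_mul_cos_mul_sin _ _ _).le
  · obtain rfl : k = i + 1 := by omega
    simp [pathWithLoopEntry, sineVector] at hlast ⊢
    rw [← mul_le_mul_iff_of_pos_left ha]
    calc _ = a ^ 2 * sin (i * φ) + d * b * sin ((i + 1) * φ) := by field_simp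
      _ ≤ 2 * b ^ 2 * cos φ * sin ((i + 1) * φ) := hlast
      _ = _ := by field_simp

def pathWithLoop (k : ℕ) (a b d : ℝ) : Matrix (Fin k) (Fin k) ℝ :=
  of fun i j => pathWithLoopEntry k a b d i j

theorem specRad_pathWithLoop_le {k : ℕ} (hk : 2 ≤ k) {a b d φ : ℝ} (ha : 0 < a) (hb : 0 < b)
    (hd : 0 ≤ d) (hφ : 0 < φ) (hkφ : k * φ < π)
    (hlast : a ^ 2 * sin ((k - 1 : ℕ) * φ) + d * b * sin (k * φ) ≤
      2 * b ^ 2 * cos φ * sin (k * φ)) :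
    specRad (pathWithLoop k a b d) ≤ 2 * b * cos φ := by
  have hK : (2 : ℝ) ≤ k := by exact_mod_cast hk
  have hcos : 0 ≤ cos φ :=
    cos_nonneg_of_neg_pi_div_two_le_of_le (by linarith [pi_pos]) (by nlinarith)
  refine specRad_le_of_mulVec_le (by positivity) (fun i j => ?_) (fun i => ?_)
    (fun i => pathWithLoop_row_le ha hlast i.isLt)
  · simp only [pathWithLoop, of_apply, pathWithLoopEntry]
    split_ifs <;> positivity
  · have hi : ((i : ℕ) + 1 : ℕ) * φ ≤ k * φ := by gcongr; exact_mod_cast i.isLt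
    have := sin_pos_of_pos_of_lt_pi (by positivity) (hi.trans_lt hkφ)
    simp only [sineVector]
    split_ifs <;> positivity

theorem two_mul_one_sub_cos_lt {Δ : ℝ} {k : ℕ} (hk : 2 ≤ k) (hΔk : 4 ≤ Δ ∨ (Δ = 3 ∧ 4 ≤ k)) :
    2 * (1 - cos (π / (2 * k + 1))) < (√(Δ - 1) - 1) ^ 2 := by
  have hcos := one_sub_sq_div_two_le_cos (x := π / (2 * k + 1))
  have hπ := pi_lt_d2
  rcases hΔk with hΔ | ⟨rfl, hk4⟩
  · have hθ : (π / (2 * k + 1)) ^ 2 ≤ (3.15 / 5) ^ 2 := by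
      gcongr
      · linarith [show (2 : ℝ) ≤ k by exact_mod_cast hk]
    have hb : 0.732 ^ 2 ≤ (√(Δ - 1) - 1) ^ 2 := by
      gcongr
      linarith [le_sqrt_of_sq_le (show (1.732 : ℝ) ^ 2 ≤ Δ - 1 by linarith)]
    norm_num at hθ hb
    linarith
  · have hθ : (π / (2 * k + 1)) ^ 2 ≤ (3.15 / 9) ^ 2 := by
      gcongr
      · linarith [show (4 : ℝ) ≤ k by exact_mod_cast hk4]
    have hb : 0.414 ^ 2 ≤ (√(3 - 1) - 1) ^ 2 := by
      gcongr
      linarith [le_sqrt_of_sq_le (show (1.414 : ℝ) ^ 2 ≤ 3 - 1 by norm_num)]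
    norm_num at hθ hb
    linarith

theorem pathWithLoop_lastRow_lt {k : ℕ} (hk : 1 ≤ k) {b θ : ℝ} (hθ : (2 * k + 1) * θ = π)
    (hb : 2 * (1 - cos θ) < (b - 1) ^ 2) :
    (b ^ 2 - 1) * sin ((k - 1 : ℕ) * θ) + 2 * b * sin (k * θ) <
      2 * b ^ 2 * cos θ * sin (k * θ) := by
  have hkθ : k * θ = π / 2 - θ / 2 := by linarith
  have hk1θ : ((k - 1 : ℕ) : ℝ) * θ = π / 2 - 3 * (θ / 2) := by
    rw [Nat.cast_sub hk]; push_cast; linarith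
  have h3 : cos (3 * (θ / 2)) = (2 * cos θ - 1) * cos (θ / 2) := by
    rw [cos_three_mul, show θ = 2 * (θ / 2) by ring, cos_two_mul]; ring_nf
  have hK : (1 : ℝ) ≤ k := by exact_mod_cast hk
  have hθ0 : 0 < θ := by nlinarith [pi_pos]
  have hpos : 0 < cos (θ / 2) := cos_pos_of_mem_Ioo ⟨by linarith [pi_pos], by nlinarith⟩
  rw [hkθ, hk1θ, sin_pi_div_two_sub, sin_pi_div_two_sub, h3]
  nlinarith

theorem stmt8 (Δ : ℝ) (k : ℕ) (hk : 2 ≤ k)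
    (hΔk : 4 ≤ Δ ∨ (Δ = 3 ∧ 4 ≤ k))
    (X : Matrix (Fin k) (Fin k) ℝ)
    (hX : ∀ i j : Fin k, X i j =
      if i = j then (if (i : ℕ) = k - 1 then 2 else 0)
      else if (i : ℕ) + 1 = (j : ℕ) ∨ (j : ℕ) + 1 = (i : ℕ) then
        (if (i : ℕ) = k - 1 ∨ (j : ℕ) = k - 1 then Real.sqrt (Δ - 2) else Real.sqrt (Δ - 1))
      else 0) :
    specRad X < 2 * Real.sqrt (Δ - 1) * Real.cos (π / (2 * k + 1)) := by
  have hΔ : 3 ≤ Δ := by rcases hΔk with h | ⟨rfl, -⟩ <;> linarith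
  have hX' : X = pathWithLoop k √(Δ - 2) √(Δ - 1) 2 := by
    ext i j
    simp [hX, pathWithLoop, pathWithLoopEntry, Fin.ext_iff]
  have hslack := two_mul_one_sub_cos_lt hk hΔk
  set b := √(Δ - 1)
  set θ := π / (2 * k + 1) with hθ_def
  have hθ : (2 * k + 1) * θ = π := by rw [hθ_def]; field_simp
  have ha : 0 < √(Δ - 2) := sqrt_pos.2 (by linarith)
  have hb : 0 < b := sqrt_pos.2 (by linarith)
  have hab : √(Δ - 2) ^ 2 = b ^ 2 - 1 := by rw [sq_sqrt, sq_sqrt] <;> linarith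
  set L : ℝ → ℝ := fun φ => √(Δ - 2) ^ 2 * sin ((k - 1 : ℕ) * φ) + 2 * b * sin (k * φ) -
    2 * b ^ 2 * cos φ * sin (k * φ)
  have hLθ : L θ < 0 := by
    simp only [L, hab]
    linarith [pathWithLoop_lastRow_lt (by omega) hθ hslack]
  have hθ0 : 0 < θ := by positivity
  obtain ⟨φ, ⟨hθφ, hφθ⟩, hLφ⟩ : ∃ φ ∈ Set.Ioo θ (2 * θ), L φ < 0 :=
    (((show Continuous L by fun_prop).continuousAt.eventually_lt continuousAt_const hLθ
      |>.filter_mono nhdsWithin_le_nhds).and (Ioo_mem_nhdsGT (by linarith))).exists.imp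
        fun φ h => ⟨h.2, h.1⟩
  have hK : (2 : ℝ) ≤ k := by exact_mod_cast hk
  calc specRad X ≤ 2 * b * cos φ := hX' ▸
        specRad_pathWithLoop_le hk ha hb zero_le_two (by linarith) (by nlinarith) (by linarith)
    _ < 2 * b * cos θ := by
        gcongr
        exact cos_lt_cos_of_nonneg_of_le_pi hθ0.le (by nlinarith) hθφ
end

section
/- There exists γ_0 ∈ (−0.25, −0.2) such that the spectral radius of the 3×3 symmetric matrix Z(γ_0) with rows (γ_0, √2, 0), (√2, 0, 1), (0, 1, 2) equals 2√2·cos(π/7). -/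
/-!
Expanding `det (t - Z(x))` gives the cubic `(t - x)(t² - 2t - 1) - 2t + 4`, which is affine in `x`.
So for `μ = 2√2 cos(π/7)` one can solve for the unique `γ₀` making `μ` a root, and the numerical
bounds `2.5482 < μ < 2.5484` (from the minimal polynomial `8c³ - 4c² - 4c + 1` of `c = cos(π/7)`)
put `γ₀` in `(-0.25, -0.2)`. For `x ≤ 0` the cubic is strictly increasing on `[2, ∞)`, so `μ` is
its largest real root.
-/

open Matrix Real

/-- The 3×3 symmetric matrix Z(x) with rows (x, √2, 0), (√2, 0, 1), (0, 1, 2). -/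
noncomputable def Zmat (x : ℝ) : Matrix (Fin 3) (Fin 3) ℝ :=
  !![x, Real.sqrt 2, 0; Real.sqrt 2, 0, 1; 0, 1, 2]

open Polynomial Set

def zmatCubic (x t : ℝ) : ℝ := (t - x) * (t ^ 2 - 2 * t - 1) - 2 * t + 4

theorem eval_charpoly_Zmat (x t : ℝ) : (Zmat x).charpoly.eval t = zmatCubic x t := by
  rw [Matrix.charpoly, ← coe_evalRingHom, RingHom.map_det, det_fin_three]
  simp only [Zmat, RingHom.mapMatrix_apply, coe_evalRingHom, map_apply, charmatrix_apply_eq,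
    of_apply, cons_val', cons_val_zero, cons_val_fin_one, eval_sub, eval_X, eval_C, cons_val_one,
    map_zero, sub_zero, cons_val, ne_eq, Fin.reduceEq, not_false_eq_true, charmatrix_apply_ne,
    map_one, eval_neg, eval_one, mul_neg, mul_one, neg_sub, zero_ne_one, one_ne_zero, neg_mul,
    Nat.ofNat_nonneg, mul_self_sqrt, neg_neg, neg_zero, eval_zero, mul_zero, add_zero, zero_mul,
    zmatCubic]
  ring

theorem mem_roots_charpoly_Zmat_iff {x t : ℝ} :
    t ∈ (Zmat x).charpoly.roots ↔ zmatCubic x t = 0 := by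
  rw [mem_roots (charpoly_monic _).ne_zero, IsRoot, eval_charpoly_Zmat]

theorem zmatCubic_strictMonoOn {x : ℝ} (hx : x ≤ 0) : StrictMonoOn (zmatCubic x) (Ici 2) := by
  intro s (hs : 2 ≤ s) t (ht : 2 ≤ t) hst
  have hquot : 0 < t ^ 2 + t * s + s ^ 2 - (2 + x) * (t + s) + 2 * x - 3 := by
    nlinarith [mul_le_mul hs ht zero_le_two (by linarith), mul_nonneg (neg_nonneg.2 hx)
      (show 0 ≤ t + s - 2 by linarith)]
  have hdiff : zmatCubic x t - zmatCubic x s =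
      (t - s) * (t ^ 2 + t * s + s ^ 2 - (2 + x) * (t + s) + 2 * x - 3) := by
    unfold zmatCubic; ring
  nlinarith [mul_pos (sub_pos.2 hst) hquot]

theorem zmatCubic_sub_div_eq_zero {t : ℝ} (ht : t ^ 2 - 2 * t - 1 ≠ 0) :
    zmatCubic (t - (2 * t - 4) / (t ^ 2 - 2 * t - 1)) t = 0 := by
  unfold zmatCubic
  rw [sub_sub_cancel, div_mul_cancel₀ _ ht]
  ring

theorem StrictMonoOn.isGreatest_preimage_singleton {α β : Type*} [LinearOrder α] [Preorder β]
    {f : α → β} {a μ : α} {b : β} (hf : StrictMonoOn f (Ici a)) (ha : a ≤ μ) (hμ : f μ = b) :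
    IsGreatest (f ⁻¹' {b}) μ := by
  refine ⟨hμ, fun t (ht : f t = b) => le_of_not_gt fun hμt => ?_⟩
  exact (hf ha (ha.trans hμt.le) hμt).ne (hμ.trans ht.symm)

theorem sqrt_two_mem_Ioo : √2 ∈ Ioo (1.414213 : ℝ) 1.414214 := by
  have h2 : √2 * √2 = 2 := mul_self_sqrt (by norm_num)
  have hpos : 0 < √2 := sqrt_pos.2 (by norm_num)
  constructor <;> nlinarith

theorem cos_pi_div_seven_cubic :
    8 * cos (π / 7) ^ 3 - 4 * cos (π / 7) ^ 2 - 4 * cos (π / 7) + 1 = 0 := by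
  set c := cos (π / 7)
  have hsupp : cos (2 * (2 * (π / 7))) = -cos (3 * (π / 7)) := by
    rw [show 2 * (2 * (π / 7)) = π - 3 * (π / 7) by ring, cos_pi_sub]
  rw [cos_two_mul, cos_two_mul, cos_three_mul] at hsupp
  have hc : 0 < c := cos_pos_of_mem_Ioo ⟨by linarith [pi_pos], by linarith [pi_pos]⟩
  have hfactor : (c + 1) * (8 * c ^ 3 - 4 * c ^ 2 - 4 * c + 1) = 0 := by linear_combination hsupp
  exact (mul_eq_zero.1 hfactor).resolve_left (by positivity)

theorem cos_pi_div_seven_mem_Ioo : cos (π / 7) ∈ Ioo (0.90096 : ℝ) 0.90098 := by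
  have hcubic := cos_pi_div_seven_cubic
  have hsqrt3 : √3 / 2 < cos (π / 7) := by
    rw [← cos_pi_div_six]
    apply cos_lt_cos_of_nonneg_of_le_pi <;> linarith [pi_pos]
  have h3 : (1.732 : ℝ) < √3 := by
    nlinarith [sq_sqrt (show (0 : ℝ) ≤ 3 by norm_num), sqrt_nonneg 3]
  have hle : cos (π / 7) ≤ 1 := cos_le_one _
  constructor
  · nlinarith [sq_nonneg (cos (π / 7) - 0.9), sq_nonneg (cos (π / 7) - 0.866)]
  · nlinarith [sq_nonneg (cos (π / 7) - 0.901), sq_nonneg (cos (π / 7) - 1)]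

theorem two_mul_sqrt_two_mul_cos_pi_div_seven_mem_Ioo :
    2 * √2 * cos (π / 7) ∈ Ioo (2.5482 : ℝ) 2.5484 := by
  obtain ⟨hs₁, hs₂⟩ := sqrt_two_mem_Ioo
  obtain ⟨hc₁, hc₂⟩ := cos_pi_div_seven_mem_Ioo
  constructor <;> nlinarith

theorem sub_div_mem_Ioo {μ : ℝ} (hμ : μ ∈ Ioo (2.5482 : ℝ) 2.5484) :
    μ - (2 * μ - 4) / (μ ^ 2 - 2 * μ - 1) ∈ Ioo (-0.25 : ℝ) (-0.2) := by
  obtain ⟨hlo, hhi⟩ := hμ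
  have hd : 0 < μ ^ 2 - 2 * μ - 1 := by nlinarith
  have hwidth := mul_pos (sub_pos.2 hlo) (sub_pos.2 hhi)
  constructor
  · have : (2 * μ - 4) / (μ ^ 2 - 2 * μ - 1) < μ + 0.25 := by
      rw [div_lt_iff₀ hd]; nlinarith
    linarith
  · have : μ + 0.2 < (2 * μ - 4) / (μ ^ 2 - 2 * μ - 1) := by
      rw [lt_div_iff₀ hd]; nlinarith
    linarith

theorem stmt15 :
    ∃ γ₀ : ℝ, γ₀ ∈ Set.Ioo (-0.25 : ℝ) (-0.2) ∧
      IsGreatest {μ : ℝ | μ ∈ (Zmat γ₀).charpoly.roots}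
        (2 * Real.sqrt 2 * Real.cos (π / 7)) := by
  set μ := 2 * √2 * cos (π / 7)
  have hμ := two_mul_sqrt_two_mul_cos_pi_div_seven_mem_Ioo
  have hγ₀ := sub_div_mem_Ioo hμ
  refine ⟨_, hγ₀, ?_⟩
  simp_rw [mem_roots_charpoly_Zmat_iff]
  have hd : μ ^ 2 - 2 * μ - 1 ≠ 0 := by nlinarith [hμ.1, hμ.2]
  exact (zmatCubic_strictMonoOn (by linarith [hγ₀.2])).isGreatest_preimage_singleton
    (by linarith [hμ.1]) (zmatCubic_sub_div_eq_zero hd)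
end
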